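/- arXiv:2304.11826 — 2 statements merged into one kernel-verified Lean document; each statement's English description precedes it below -/
import Mathlib

section
/- An undirected graph G is an orthology graph, i.e., G = Θ(T,t) for some tree T with leaf set V(G) and event labeling t of its inner vertices by {•,□}, if and only if G is a cograph. -/
/-- A planted phylogenetic rooted tree, encoded by a parent function on a
finite vertex set.  The root `0_T` is a fixed point of `parent`; every vertex
reaches the root by iterating `parent`; the root has exactly one child
(`planted`); and every inner vertex (non-root vertex having a child) has at
least two children (`phylo`). -/
structure PPTree where
  V : Type
  [fintypeV : Fintype V]
  [decEqV : DecidableEq V]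
  root : V
  parent : V → V
  parent_root : parent root = root
  reach : ∀ v : V, ∃ n : ℕ, parent^[n] v = root
  planted : ∃! v : V, v ≠ root ∧ parent v = root
  phylo : ∀ v : V, v ≠ root → (∃ u, parent u = v ∧ u ≠ v) →
      ∃ u w, parent u = v ∧ parent w = v ∧ u ≠ w ∧ u ≠ v ∧ w ≠ v

attribute [instance] PPTree.fintypeV PPTree.decEqV

namespace PPTree

variable (T : PPTree)

/-- `T.le x y` means `x ⪯_T y`, i.e. `y` is an ancestor of `x` (or `x = y`). -/
def le (x y : T.V) : Prop := ∃ n : ℕ, T.parent^[n] x = y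

/-- `T.lt x y` means `x ≺_T y`. -/
def lt (x y : T.V) : Prop := T.le x y ∧ x ≠ y

/-- Leaves are the `⪯_T`-minimal vertices, i.e. vertices without children. -/
def isLeaf (v : T.V) : Prop := ∀ u, T.parent u = v → u = v

/-- Inner vertices: neither leaves nor the planted root. -/
def inner (v : T.V) : Prop := v ≠ T.root ∧ ¬ T.isLeaf v

/-- The last common ancestor of two vertices: the `⪯_T`-minimal common
ancestor. -/
noncomputable def lca (x y : T.V) : T.V :=
  @Classical.epsilon _ ⟨T.root⟩
    fun v => T.le x v ∧ T.le y v ∧ ∀ w, T.le x w → T.le y w → T.le v w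

/-- The last common ancestor of a set of vertices. -/
noncomputable def lcaSet (A : Set T.V) : T.V :=
  @Classical.epsilon _ ⟨T.root⟩
    fun v => (∀ a ∈ A, T.le a v) ∧ ∀ w, (∀ a ∈ A, T.le a w) → T.le v w

/-- `ρ_T`, the unique child of the planted root. -/
noncomputable def rho : T.V := T.planted.choose

theorem rho_ne_root : T.rho ≠ T.root := T.planted.choose_spec.1.1

/-- Edges of `T`, identified with their child endpoint: the vertex `v ≠ 0_T`
represents the edge `(parent v, v)`. -/
abbrev Edge := {v : T.V // v ≠ T.root}

/-- The union `V(T) ∪ E(T)`. -/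
abbrev VE := T.V ⊕ T.Edge

/-- The ancestor order `⪯_T` extended to `V(T) ∪ E(T)`: for an edge `e = uv`
(`u` the parent of `v`), `x ⪯ e` iff `x ⪯ v`, `e ⪯ x` iff `u ⪯ x`, and
`e ⪯ f` iff the child endpoints are comparable accordingly. -/
def leVE : T.VE → T.VE → Prop
  | Sum.inl x, Sum.inl y => T.le x y
  | Sum.inl x, Sum.inr e => T.le x e.1
  | Sum.inr e, Sum.inl y => T.le (T.parent e.1) y
  | Sum.inr e, Sum.inr f => T.le e.1 f.1

def ltVE (a b : T.VE) : Prop := T.leVE a b ∧ a ≠ b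

/-- Two elements of `V(T) ∪ E(T)` are comparable. -/
def cmpVE (a b : T.VE) : Prop := T.leVE a b ∨ T.leVE b a

/-- Membership in `L(T)` for elements of `V(T) ∪ E(T)`. -/
def isLeafVE : T.VE → Prop
  | Sum.inl v => T.isLeaf v
  | Sum.inr _ => False

/-- Map an element of `V(T) ∪ E(T)` to a vertex (an edge `uv` is sent to its
child endpoint `v`). -/
def toVertex : T.VE → T.V
  | Sum.inl v => v
  | Sum.inr e => e.1

end PPTree

/-- Axioms (R0)–(R3) of a reconciliation map `μ : V(T) → V(S) ∪ E(S)`. -/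
structure IsRecon (T S : PPTree) (μ : T.V → S.VE) : Prop where
  R0 : ∀ x, μ x = Sum.inl S.root ↔ x = T.root
  R1 : ∀ x, S.isLeafVE (μ x) ↔ T.isLeaf x
  R2 : ∀ x y, T.lt y x → (∃ u, μ x = Sum.inl u) → (∃ v, μ y = Sum.inl v) → μ x ≠ μ y
  R3 : ∀ x y, T.lt y x → ¬ S.ltVE (μ x) (μ y)

/-- A reconciliation is HGT-free if the images of the endpoints of every edge
of `T` are `⪯_S`-comparable. -/
def IsHGTFree (T S : PPTree) (μ : T.V → S.VE) : Prop :=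
  ∀ v : T.V, v ≠ T.root → S.cmpVE (μ (T.parent v)) (μ v)

/-- `(T,S,μ,σ)` is a σ-reconciliation when `μ` restricted to `L(T)` equals
`σ`. -/
def SigmaCompat (T S : PPTree) (μ : T.V → S.VE) (σ : T.V → S.V) : Prop :=
  ∀ x, T.isLeaf x → μ x = Sum.inl (σ x)

/-- A time map for `T`. -/
def IsTimeMap (T : PPTree) (τ : T.V → ℝ) : Prop :=
  ∀ x y, T.lt x y → τ x < τ y

/-- Axioms (S0)–(S3) of a relaxed scenario `(T,S,μ,τ_T,τ_S)`. -/
structure IsRelaxedScenario (T S : PPTree) (μ : T.V → S.VE)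
    (τT : T.V → ℝ) (τS : S.V → ℝ) : Prop where
  timeT : IsTimeMap T τT
  timeS : IsTimeMap S τS
  S0 : ∀ x, μ x = Sum.inl S.root ↔ x = T.root
  S1 : ∀ x, S.isLeafVE (μ x) ↔ T.isLeaf x
  S2 : ∀ x v, μ x = Sum.inl v → τS v = τT x
  S3 : ∀ x (e : S.Edge), μ x = Sum.inr e → τS e.1 < τT x ∧ τT x < τS (S.parent e.1)

/-- A planted phylogenetic tree whose leaf set is (identified with) the finite
type `L` via the embedding `emb`. -/
structure LeafTree (L : Type) [Fintype L] [DecidableEq L] extends PPTree where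
  emb : L → toPPTree.V
  emb_inj : Function.Injective emb
  emb_leaf : ∀ v : L, toPPTree.isLeaf (emb v)
  emb_surj : ∀ l, toPPTree.isLeaf l → ∃ v : L, emb v = l

/-- The tree `T` displays the rooted triple `ab|c`:
`lca(a,b) ≺ lca(a,c) = lca(b,c)`. -/
def displaysTriple (T : PPTree) (a b c : T.V) : Prop :=
  T.lt (T.lca a b) (T.lca a c) ∧ T.lca a c = T.lca b c

section BMG

variable {V Y : Type} [Fintype V] [DecidableEq V]

/-- `y` is a best match of `x` in the leaf-colored tree `(T,σ)`:
`σ(x) ≠ σ(y)` and `lca(x,y) ⪯ lca(x,y')` for all leaves `y'` of the same color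
as `y`. -/
def LeafTree.bestMatch (T : LeafTree V) (σ : V → Y) (x y : V) : Prop :=
  σ x ≠ σ y ∧ ∀ y' : V, σ y' = σ y →
    T.toPPTree.le (T.toPPTree.lca (T.emb x) (T.emb y))
      (T.toPPTree.lca (T.emb x) (T.emb y'))

/-- `(G,σ)` is the best match graph `𝔅(T,σ)` of the leaf-colored tree
`(T,σ)`. -/
def Explains (T : LeafTree V) (σ : V → Y) (G : V → V → Prop) : Prop :=
  ∀ x y : V, G x y ↔ T.bestMatch σ x y

/-- The triple `ab|b'` is informative for `(G,σ)`. -/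
def Informative (G : V → V → Prop) (σ : V → Y) (a b b' : V) : Prop :=
  a ≠ b ∧ a ≠ b' ∧ b ≠ b' ∧ σ a ≠ σ b ∧ σ b = σ b' ∧ G a b ∧ ¬ G a b'

/-- The triple `ab|b'` is forbidden for `(G,σ)`. -/
def Forbidden (G : V → V → Prop) (σ : V → Y) (a b b' : V) : Prop :=
  a ≠ b ∧ a ≠ b' ∧ b ≠ b' ∧ σ a ≠ σ b ∧ σ b = σ b' ∧ G a b ∧ G a b'

end BMG

/-- A cograph: an undirected graph with no induced path `P₄` on four
vertices. -/
def IsCograph {V : Type} (G : SimpleGraph V) : Prop :=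
  ¬ ∃ a b c d : V, a ≠ b ∧ a ≠ c ∧ a ≠ d ∧ b ≠ c ∧ b ≠ d ∧ c ≠ d ∧
      G.Adj a b ∧ G.Adj b c ∧ G.Adj c d ∧ ¬ G.Adj a c ∧ ¬ G.Adj a d ∧ ¬ G.Adj b d

/-!
In a tree, of the three last common ancestors of three leaves two coincide and the third
lies below them; so if the pair `x z` carries a label different from those of `x y` and
`y z`, then `lca x z` is the lowest of the three. For an induced path `a b c d` this applies
to the triples `abc`, `abd` and `acd` and squeezes `lca a b = lca a c`, whose labels
differ.

Conversely, a cograph on at least two vertices or its complement is disconnected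
(Seinsche): if both `G` and `Gᶜ` were connected, so would be `G - v` and its complement,
as otherwise an induced `P₄` through `v` appears, contradicting induction. Hence a cograph
is the disjoint union or the join of two smaller cographs, and hanging the trees explaining
these below a common vertex labelled `□` or `•` explains it.
-/

namespace PPTree

variable {T : PPTree}

theorem iterate_parent_root (n : ℕ) : T.parent^[n] T.root = T.root :=
  Function.iterate_fixed T.parent_root n

theorem le_refl (x : T.V) : T.le x x := ⟨0, rfl⟩

theorem le_parent (x : T.V) : T.le x (T.parent x) := ⟨1, rfl⟩

theorem le_root (x : T.V) : T.le x T.root := T.reach x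

theorem le_trans {x y z : T.V} (hxy : T.le x y) (hyz : T.le y z) : T.le x z := by
  obtain ⟨n, rfl⟩ := hxy
  obtain ⟨m, rfl⟩ := hyz
  exact ⟨m + n, Function.iterate_add_apply _ _ _ _⟩

theorem eq_root_of_le_root {x : T.V} (h : T.le T.root x) : x = T.root := by
  obtain ⟨n, rfl⟩ := h
  exact iterate_parent_root n

theorem eq_root_of_isPeriodicPt {x : T.V} {k : ℕ} (hk : 0 < k)
    (h : Function.IsPeriodicPt T.parent k x) : x = T.root := by
  obtain ⟨N, hN⟩ := T.reach x
  have hNk : N ≤ N * k := Nat.le_mul_of_pos_right N hk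
  calc x = T.parent^[N * k] x := (h.const_mul N).symm
    _ = T.parent^[N * k - N] (T.parent^[N] x) := by
        rw [← Function.iterate_add_apply, Nat.sub_add_cancel hNk]
    _ = T.root := by rw [hN, iterate_parent_root]

theorem le_antisymm {x y : T.V} (hxy : T.le x y) (hyx : T.le y x) : x = y := by
  obtain ⟨n, rfl⟩ := hxy
  obtain ⟨m, hm⟩ := hyx
  rcases Nat.eq_zero_or_pos (m + n) with h | h
  · rw [Nat.eq_zero_of_add_eq_zero_left h]; rfl
  · have hx : x = T.root := eq_root_of_isPeriodicPt h (by
      rw [Function.IsPeriodicPt, Function.IsFixedPt, Function.iterate_add_apply, hm])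
    subst hx
    exact (iterate_parent_root n).symm

theorem le_total_of_le {x y z : T.V} (hy : T.le x y) (hz : T.le x z) :
    T.le y z ∨ T.le z y := by
  obtain ⟨n, rfl⟩ := hy
  obtain ⟨m, rfl⟩ := hz
  rcases Nat.le_total n m with h | h
  · exact Or.inl ⟨m - n, by rw [← Function.iterate_add_apply, Nat.sub_add_cancel h]⟩
  · exact Or.inr ⟨n - m, by rw [← Function.iterate_add_apply, Nat.sub_add_cancel h]⟩

theorem exists_isLCA (x y : T.V) :
    ∃ v, T.le x v ∧ T.le y v ∧ ∀ w, T.le x w → T.le y w → T.le v w := by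
  classical
  have hex : ∃ k, T.le y (T.parent^[k] x) := by
    obtain ⟨N, hN⟩ := T.reach x
    exact ⟨N, hN ▸ le_root y⟩
  refine ⟨T.parent^[Nat.find hex] x, ⟨_, rfl⟩, Nat.find_spec hex, ?_⟩
  rintro w ⟨m, rfl⟩ hyw
  have : Nat.find hex ≤ m := Nat.find_min' hex hyw
  exact ⟨m - Nat.find hex, by rw [← Function.iterate_add_apply, Nat.sub_add_cancel this]⟩

theorem le_lca_left (x y : T.V) : T.le x (T.lca x y) :=
  (Classical.epsilon_spec (exists_isLCA x y)).1

theorem le_lca_right (x y : T.V) : T.le y (T.lca x y) :=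
  (Classical.epsilon_spec (exists_isLCA x y)).2.1

theorem lca_le {x y w : T.V} (hx : T.le x w) (hy : T.le y w) : T.le (T.lca x y) w :=
  (Classical.epsilon_spec (exists_isLCA x y)).2.2 w hx hy

theorem lca_eq_of_isLCA {x y v : T.V} (hx : T.le x v) (hy : T.le y v)
    (hmin : ∀ w, T.le x w → T.le y w → T.le v w) : T.lca x y = v :=
  le_antisymm (lca_le hx hy) (hmin _ (le_lca_left x y) (le_lca_right x y))

theorem lca_comm (x y : T.V) : T.lca x y = T.lca y x :=
  lca_eq_of_isLCA (le_lca_right y x) (le_lca_left y x) fun _ hx hy => lca_le hy hx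

theorem lca_triple (x y z : T.V) :
    (T.lca x y = T.lca x z ∧ T.le (T.lca y z) (T.lca x y)) ∨
    (T.lca x z = T.lca y z ∧ T.le (T.lca x y) (T.lca x z)) ∨
    (T.lca x y = T.lca y z ∧ T.le (T.lca x z) (T.lca x y)) := by
  have hxp := le_lca_left x y; have hyp := le_lca_right x y
  have hxq := le_lca_left x z; have hzq := le_lca_right x z
  have hyr := le_lca_left y z; have hzr := le_lca_right y z
  rcases le_total_of_le hxp hxq with hpq | hqp
  · rcases le_total_of_le hyp hyr with hpr | hrp
    · exact Or.inr <| Or.inl ⟨le_antisymm (lca_le (le_trans hxp hpr) hzr)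
        (lca_le (le_trans hyp hpq) hzq), hpq⟩
    · exact Or.inl ⟨le_antisymm hpq (lca_le hxp (le_trans hzr hrp)), hrp⟩
  · rcases le_total_of_le hzq hzr with hqr | hrq
    · exact Or.inr <| Or.inr ⟨le_antisymm (lca_le (le_trans hxq hqr) hyr)
        (lca_le hyp (le_trans hzq hqp)), hqp⟩
    · exact Or.inl ⟨le_antisymm (lca_le hxq (le_trans hyr hrq)) hqp, le_trans hrq hqp⟩

theorem lca_le_of_label_ne {β : Type*} (t : T.V → β) {x y z : T.V}
    (hxy : t (T.lca x z) ≠ t (T.lca x y)) (hyz : t (T.lca x z) ≠ t (T.lca y z)) :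
    T.le (T.lca x z) (T.lca x y) ∧ T.lca x y = T.lca y z := by
  rcases lca_triple x y z with h | h | h
  · exact absurd (congrArg t h.1.symm) hxy
  · exact absurd (congrArg t h.1) hyz
  · exact ⟨h.2, h.1⟩

theorem parent_rho : T.parent T.rho = T.root := T.planted.choose_spec.1.2

theorem eq_rho_of_parent_eq_root {v : T.V} (hv : v ≠ T.root) (h : T.parent v = T.root) :
    v = T.rho :=
  T.planted.choose_spec.2 v ⟨hv, h⟩

theorem root_not_isLeaf : ¬ T.isLeaf T.root :=
  fun h => T.rho_ne_root (h T.rho parent_rho)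

theorem isLeaf_ne_root {v : T.V} (h : T.isLeaf v) : v ≠ T.root :=
  fun hv => root_not_isLeaf (hv ▸ h)

theorem le_rho {v : T.V} (hv : v ≠ T.root) : T.le v T.rho := by
  obtain ⟨n, hn⟩ := T.reach v
  induction n generalizing v with
  | zero => exact absurd hn hv
  | succ n ih =>
    by_cases hp : T.parent v = T.root
    · exact eq_rho_of_parent_eq_root hv hp ▸ le_refl v
    · exact le_trans (le_parent v) (ih hp hn)

theorem lca_ne_root {x y : T.V} (hx : x ≠ T.root) (hy : y ≠ T.root) :
    T.lca x y ≠ T.root := fun h =>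
  T.rho_ne_root (eq_root_of_le_root (h ▸ lca_le (le_rho hx) (le_rho hy)))

end PPTree

namespace LeafTree

variable {V : Type} [Fintype V] [DecidableEq V]

/-- The orthology graph `Θ(T,t)`; the label `true` stands for a speciation `•`. -/
def orthologyGraph (T : LeafTree V) (t : T.V → Bool) : SimpleGraph V where
  Adj x y := x ≠ y ∧ t (T.lca (T.emb x) (T.emb y)) = true
  symm := ⟨fun _ _ h => ⟨h.1.symm, PPTree.lca_comm (T := T.toPPTree) _ _ ▸ h.2⟩⟩
  loopless := ⟨fun _ h => h.1 rfl⟩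

theorem isCograph_orthologyGraph (T : LeafTree V) (t : T.V → Bool) :
    IsCograph (T.orthologyGraph t) := by
  rintro ⟨a, b, c, d, -, hac, had, -, hbd, -, hab, hbc, hcd, hnac, hnad, hnbd⟩
  have label_false {x y} (hxy : x ≠ y) (h : ¬ (T.orthologyGraph t).Adj x y) :
      t (T.lca (T.emb x) (T.emb y)) = false := by simpa [orthologyGraph, hxy] using h
  replace hab := hab.2; replace hbc := hbc.2; replace hcd := hcd.2
  replace hnac := label_false hac hnac; replace hnad := label_false had hnad
  replace hnbd := label_false hbd hnbd
  rw [PPTree.lca_comm] at hnbd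
  have hac_ab := (PPTree.lca_le_of_label_ne t (x := T.emb a) (y := T.emb b) (z := T.emb c)
    (by simp [*]) (by simp [*])).1
  have hab_ad := (PPTree.lca_le_of_label_ne t (x := T.emb a) (y := T.emb d) (z := T.emb b)
    (by simp [*]) (by simp [*])).1
  have hca : T.lca (T.emb c) (T.emb a) = T.lca (T.emb a) (T.emb c) := PPTree.lca_comm _ _
  have hac_ad := (PPTree.lca_le_of_label_ne t (x := T.emb c) (y := T.emb a) (z := T.emb d)
    (by simp [*]) (by simp [*])).2
  rw [hca] at hac_ad
  rw [← hac_ad] at hab_ad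
  have := PPTree.le_antisymm hab_ad hac_ab
  simp [this, hnac] at hab

end LeafTree

namespace SimpleGraph

variable {W : Type} {G : SimpleGraph W}

theorem comap_subtype_compl (p : W → Prop) :
    (G.comap (Subtype.val : Subtype p → W))ᶜ = Gᶜ.comap Subtype.val := by
  ext a b
  simp [Subtype.ext_iff]

theorem Preconnected.exists_adj_reachable_comap_ne (hG : G.Preconnected) {v : W}
    (x : {w // w ≠ v}) :
    ∃ c : {w // w ≠ v}, G.Adj v c ∧ (G.comap Subtype.val).Reachable x c := by
  obtain ⟨d, -, ⟨hd, hx⟩, hdv⟩ := (hG x v).some.exists_boundary_dart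
    {w | ∃ h : w ≠ v, (G.comap Subtype.val).Reachable x ⟨w, h⟩} ⟨x.2, .rfl⟩ (by simp)
  have hsnd : d.snd = v := by
    by_contra h
    have hadj : (G.comap Subtype.val).Adj (⟨d.fst, hd⟩ : {w // w ≠ v}) ⟨d.snd, h⟩ := d.adj
    exact hdv ⟨h, hx.trans hadj.reachable⟩
  exact ⟨⟨_, hd⟩, hsnd ▸ d.adj.symm, hx⟩

theorem exists_bool_not_adj_of_not_preconnected (h : ¬ G.Preconnected) :
    ∃ f : W → Bool, (∃ x y, f x ≠ f y) ∧ ∀ x y, f x ≠ f y → ¬ G.Adj x y := by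
  classical
  obtain ⟨x, y, hxy⟩ : ∃ x y, ¬ G.Reachable x y := by simpa [Preconnected] using h
  refine ⟨fun w => decide (G.Reachable x w), ⟨x, y, by simp [hxy]⟩,
    fun u w huw hadj => huw ?_⟩
  simp only [decide_eq_decide]
  exact ⟨fun hu => hu.trans hadj.reachable, fun hw => hw.trans hadj.symm.reachable⟩

end SimpleGraph

namespace IsCograph

open SimpleGraph

variable {V W : Type} {G : SimpleGraph W}

theorem comap {f : V → W} (hf : Function.Injective f) (hG : IsCograph G) :
    IsCograph (G.comap f) := by
  rintro ⟨a, b, c, d, hab, hac, had, hbc, hbd, hcd, h⟩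
  exact hG ⟨f a, f b, f c, f d, hf.ne hab, hf.ne hac, hf.ne had, hf.ne hbc, hf.ne hbd,
    hf.ne hcd, h⟩

theorem compl (hG : IsCograph G) : IsCograph Gᶜ := by
  rintro ⟨a, b, c, d, hab, hac, had, hbc, hbd, hcd, e1, e2, e3, n1, n2, n3⟩
  simp only [compl_adj, not_and, not_not] at e1 e2 e3 n1 n2 n3
  exact hG ⟨b, d, a, c, hbd, Ne.symm hab, hbc, Ne.symm had, Ne.symm hcd, hac,
    n3 hbd, (n2 had).symm, n1 hac, fun h => e1.2 h.symm, e2.2, fun h => e3.2 h.symm⟩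

/-- If `G - v` were disconnected, an edge `ab` with `a ∼ v ≁ b` in the component of a
non-neighbour of `v`, together with a neighbour `e` of `v` in another component, would give
the induced path `b a v e`. -/
theorem preconnected_comap_ne (hG : IsCograph G) (hc : G.Preconnected)
    (hcc : Gᶜ.Preconnected) (v : W) :
    (G.comap (Subtype.val : {w // w ≠ v} → W)).Preconnected := by
  classical
  set H := G.comap (Subtype.val : {w // w ≠ v} → W)
  by_contra hH
  obtain ⟨p, q, hpq⟩ : ∃ p q, ¬ H.Reachable p q := by simpa [Preconnected] using hH
  have : Nontrivial W := ⟨⟨v, p, p.2.symm⟩⟩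
  obtain ⟨z, hz⟩ := hcc.exists_adj_of_nontrivial v
  obtain ⟨hvz, hnvz⟩ := (compl_adj G _ _).1 hz
  let z' : {w // w ≠ v} := ⟨z, hvz.symm⟩
  obtain ⟨d, hd⟩ : ∃ d, ¬ H.Reachable z' d := by
    by_cases hp : H.Reachable z' p
    · exact ⟨q, fun hq => hpq (hp.symm.trans hq)⟩
    · exact ⟨p, hp⟩
  obtain ⟨c, hvc, hzc⟩ := hc.exists_adj_reachable_comap_ne z'
  obtain ⟨e, hve, hde⟩ := hc.exists_adj_reachable_comap_ne d
  have hze : ¬ H.Reachable z' e := fun h => hd (h.trans hde.symm)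
  let w := hzc.symm.some
  obtain ⟨⟨⟨a, b⟩, hab⟩, hdart, ha, hb⟩ :=
    w.exists_boundary_dart {x | G.Adj v x} hvc hnvz
  have hza : H.Reachable z' a :=
    hzc.trans (w.takeUntil a (w.dart_fst_mem_support_of_mem_darts hdart)).reachable
  have hzb : H.Reachable z' b := hza.trans hab.reachable
  have hne {x : {w // w ≠ v}} (hx : H.Reachable z' x) : x.1 ≠ e.1 :=
    fun h => hze (Subtype.ext h ▸ hx)
  have hnadj {x : {w // w ≠ v}} (hx : H.Reachable z' x) : ¬ G.Adj x e :=
    fun h => hze (hx.trans (Adj.reachable (h : H.Adj x e)))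
  exact hG ⟨b, a, v, e, fun h => hab.ne (Subtype.ext h).symm, b.2, hne hzb, a.2, hne hza,
    e.2.symm, hab.symm, ha.symm, hve, fun h => hb h.symm, hnadj hzb, hnadj hza⟩

theorem not_preconnected_or_not_preconnected_compl [Finite W] [Nontrivial W]
    (hG : IsCograph G) : ¬ G.Preconnected ∨ ¬ Gᶜ.Preconnected := by
  induction h : Nat.card W using Nat.strong_induction_on generalizing W with
  | _ n ih =>
  rw [← not_and_or]
  rintro ⟨hc, hcc⟩
  obtain ⟨v⟩ := ‹Nontrivial W›.to_nonempty
  rcases subsingleton_or_nontrivial {w // w ≠ v} with hW | hW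
  · obtain ⟨u, hu⟩ := hc.exists_adj_of_nontrivial v
    obtain ⟨u', hu'⟩ := hcc.exists_adj_of_nontrivial v
    have : u = u' := congrArg Subtype.val (Subsingleton.elim
      (⟨u, hu.ne.symm⟩ : {w // w ≠ v}) ⟨u', hu'.ne.symm⟩)
    exact ((compl_adj G _ _).1 hu').2 (this ▸ hu)
  · have hcard : Nat.card {w // w ≠ v} < n := h ▸ Finite.card_subtype_lt (not_not.2 rfl)
    rcases ih _ hcard (hG.comap Subtype.val_injective) rfl with h' | h'
    · exact h' (hG.preconnected_comap_ne hc hcc v)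
    · rw [comap_subtype_compl] at h'
      exact h' (hG.compl.preconnected_comap_ne hcc (by rwa [compl_compl]) v)

theorem exists_bool_adj_iff [Finite W] [Nontrivial W] (hG : IsCograph G) :
    ∃ (f : W → Bool) (b : Bool), (∃ x y, f x ≠ f y) ∧
      ∀ x y, f x ≠ f y → (G.Adj x y ↔ b = true) := by
  rcases hG.not_preconnected_or_not_preconnected_compl with h | h
  · obtain ⟨f, hf, hadj⟩ := exists_bool_not_adj_of_not_preconnected h
    exact ⟨f, false, hf, fun x y hxy => iff_of_false (hadj x y hxy) Bool.false_ne_true⟩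
  · obtain ⟨f, hf, hadj⟩ := exists_bool_not_adj_of_not_preconnected h
    refine ⟨f, true, hf, fun x y hxy => iff_of_true ?_ rfl⟩
    have hne : x ≠ y := fun h => hxy (congrArg f h)
    simpa [hne] using hadj x y hxy

end IsCograph

namespace PPTree

section

variable {ι : Type} (T : ι → PPTree)

/-- Vertices of the join of the trees `T i`: `none` is the new root, `some none` the
vertex joining the subtrees (it replaces every old root), and `some (some ⟨i, v⟩)` a
non-root vertex `v` of `T i`. -/
abbrev JoinV := Option (Option (Σ i, {v : (T i).V // v ≠ (T i).root}))

def toJoin (i : ι) (v : (T i).V) : JoinV T :=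
  if h : v = (T i).root then some none else some (some ⟨i, v, h⟩)

def joinParent : JoinV T → JoinV T
  | some (some ⟨i, v⟩) => toJoin T i ((T i).parent v)
  | _ => none

variable {T}

theorem toJoin_root (i : ι) : toJoin T i (T i).root = some none := dif_pos rfl

theorem toJoin_of_ne_root {i : ι} {v : (T i).V} (hv : v ≠ (T i).root) :
    toJoin T i v = some (some ⟨i, v, hv⟩) := dif_neg hv

theorem toJoin_ne_none (i : ι) (v : (T i).V) : toJoin T i v ≠ none := by
  unfold toJoin; split_ifs <;> simp

theorem toJoin_injective (i : ι) : Function.Injective (toJoin T i) := by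
  intro v w h
  unfold toJoin at h
  split_ifs at h with hv hw hw <;> simp_all

theorem toJoin_eq_toJoin {i j : ι} {v : (T i).V} {w : (T j).V}
    (h : toJoin T i v = toJoin T j w) : i = j ∨ toJoin T i v = some none := by
  unfold toJoin at h ⊢
  split_ifs at h ⊢ with hv hw <;> simp_all

theorem joinParent_toJoin {i : ι} {v : (T i).V} (hv : v ≠ (T i).root) :
    joinParent T (toJoin T i v) = toJoin T i ((T i).parent v) := by
  rw [toJoin_of_ne_root hv]; rfl

theorem joinParent_eq_toJoin_iff {i : ι} {u : JoinV T} {v : (T i).V} (hv : v ≠ (T i).root) :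
    joinParent T u = toJoin T i v ↔ ∃ w, u = toJoin T i w ∧ (T i).parent w = v := by
  constructor
  · intro h
    rcases u with _ | _ | ⟨j, w, hw⟩
    · exact absurd h.symm (toJoin_ne_none i v)
    · exact absurd h.symm (toJoin_ne_none i v)
    · change toJoin T j ((T j).parent w) = toJoin T i v at h
      rcases toJoin_eq_toJoin h with rfl | hnone
      · exact ⟨w, (toJoin_of_ne_root hw).symm, toJoin_injective j h⟩
      · rw [h, toJoin_of_ne_root hv] at hnone
        cases hnone
  · rintro ⟨w, rfl, rfl⟩
    exact joinParent_toJoin fun hw => hv (hw ▸ (T i).parent_root)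

theorem exists_iterate_joinParent_eq_none (x : JoinV T) :
    ∃ n, (joinParent T)^[n] x = none := by
  suffices h : ∀ i (v : (T i).V), ∃ n, (joinParent T)^[n] (toJoin T i v) = none by
    rcases x with _ | _ | ⟨i, v, hv⟩
    · exact ⟨0, rfl⟩
    · exact ⟨1, rfl⟩
    · exact toJoin_of_ne_root hv ▸ h i v
  intro i v
  obtain ⟨n, hn⟩ := (T i).reach v
  induction n generalizing v with
  | zero => exact ⟨1, by rw [show v = (T i).root from hn, toJoin_root]; rfl⟩
  | succ n ih =>
    by_cases hv : v = (T i).root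
    · exact ⟨1, by rw [hv, toJoin_root]; rfl⟩
    · obtain ⟨m, hm⟩ := ih ((T i).parent v) hn
      exact ⟨m + 1, by rw [Function.iterate_succ_apply, joinParent_toJoin hv, hm]⟩

theorem existsUnique_joinParent_eq_none :
    ∃! x : JoinV T, x ≠ none ∧ joinParent T x = none := by
  refine ⟨some none, ⟨by simp, rfl⟩, ?_⟩
  rintro (_ | _ | ⟨j, w, hw⟩) ⟨hx, hpx⟩
  · exact absurd rfl hx
  · rfl
  · exact absurd hpx (toJoin_ne_none j _)

theorem toJoin_rho_ne_some_none (i : ι) : toJoin T i (T i).rho ≠ some none := by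
  rw [← toJoin_root i]
  exact (toJoin_injective i).ne (T i).rho_ne_root

theorem joinParent_toJoin_rho (i : ι) : joinParent T (toJoin T i (T i).rho) = some none := by
  rw [joinParent_toJoin (T i).rho_ne_root, parent_rho, toJoin_root]

theorem joinParent_phylo [Nontrivial ι] (x : JoinV T) (hx : x ≠ none)
    (hchild : ∃ u, joinParent T u = x ∧ u ≠ x) :
    ∃ u w, joinParent T u = x ∧ joinParent T w = x ∧ u ≠ w ∧ u ≠ x ∧ w ≠ x := by
  rcases x with _ | _ | ⟨i, v, hv⟩
  · exact absurd rfl hx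
  · obtain ⟨i, j, hij⟩ := exists_pair_ne ι
    refine ⟨_, _, joinParent_toJoin_rho i, joinParent_toJoin_rho j, fun h => ?_,
      toJoin_rho_ne_some_none i, toJoin_rho_ne_some_none j⟩
    exact (toJoin_eq_toJoin h).elim hij (toJoin_rho_ne_some_none i)
  · rw [← toJoin_of_ne_root hv] at hchild ⊢
    obtain ⟨_, hu, hune⟩ := hchild
    obtain ⟨u, rfl, hpu⟩ := (joinParent_eq_toJoin_iff hv).1 hu
    obtain ⟨a, b, hpa, hpb, hab, hav, hbv⟩ :=
      (T i).phylo v hv ⟨u, hpu, fun h => hune (h ▸ rfl)⟩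
    exact ⟨_, _, (joinParent_eq_toJoin_iff hv).2 ⟨a, rfl, hpa⟩,
      (joinParent_eq_toJoin_iff hv).2 ⟨b, rfl, hpb⟩, (toJoin_injective i).ne hab,
      (toJoin_injective i).ne hav, (toJoin_injective i).ne hbv⟩

def joinLabel {β : Type} (t : ∀ i, (T i).V → β) (b : β) : JoinV T → β
  | some (some ⟨i, v⟩) => t i v
  | _ => b

theorem joinLabel_toJoin {β : Type} (t : ∀ i, (T i).V → β) (b : β) {i : ι} {v : (T i).V}
    (hv : v ≠ (T i).root) : joinLabel t b (toJoin T i v) = t i v := by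
  rw [toJoin_of_ne_root hv]; rfl

variable (T) in
abbrev join [Fintype ι] [DecidableEq ι] [Nontrivial ι] : PPTree where
  V := JoinV T
  root := none
  parent := joinParent T
  parent_root := rfl
  reach := exists_iterate_joinParent_eq_none
  planted := existsUnique_joinParent_eq_none
  phylo := joinParent_phylo

end

section

variable {ι : Type} [Fintype ι] [DecidableEq ι] [Nontrivial ι] {T : ι → PPTree}

theorem join_le_toJoin_iff {i : ι} {v : (T i).V} {y : (join T).V} :
    (join T).le (toJoin T i v) y ↔ y = none ∨ ∃ w, (T i).le v w ∧ toJoin T i w = y := by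
  constructor
  · rintro ⟨n, rfl⟩
    refine Function.Iterate.rec
      (motive := fun y => y = none ∨ ∃ w, (T i).le v w ∧ toJoin T i w = y)
      (Or.inr ⟨v, le_refl v, rfl⟩) ?_ n
    rintro _ (rfl | ⟨w, hvw, rfl⟩)
    · exact Or.inl rfl
    · by_cases hw : w = (T i).root
      · exact Or.inl (by rw [hw, toJoin_root]; rfl)
      · exact Or.inr ⟨_, le_trans hvw (le_parent w), (joinParent_toJoin hw).symm⟩
  · rintro (rfl | ⟨w, ⟨n, rfl⟩, rfl⟩)
    · exact le_root _
    · refine Function.Iterate.rec (motive := fun w => (join T).le (toJoin T i v) (toJoin T i w))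
        (le_refl _) ?_ n
      intro w hw
      by_cases hroot : w = (T i).root
      · rwa [hroot, (T i).parent_root, ← hroot]
      · exact le_trans hw (joinParent_toJoin (T := T) hroot ▸ le_parent (T := join T) _)

theorem toJoin_le_toJoin_iff {i : ι} {v w : (T i).V} :
    (join T).le (toJoin T i v) (toJoin T i w) ↔ (T i).le v w := by
  rw [join_le_toJoin_iff]
  constructor
  · rintro (h | ⟨u, hvu, hu⟩)
    · exact absurd h (toJoin_ne_none i w)
    · exact toJoin_injective i hu ▸ hvu
  · exact fun h => Or.inr ⟨w, h, rfl⟩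

theorem lca_toJoin (i : ι) (v w : (T i).V) :
    (join T).lca (toJoin T i v) (toJoin T i w) = toJoin T i ((T i).lca v w) := by
  refine lca_eq_of_isLCA (toJoin_le_toJoin_iff.2 (le_lca_left v w))
    (toJoin_le_toJoin_iff.2 (le_lca_right v w)) fun y hvy hwy => ?_
  rcases join_le_toJoin_iff.1 hvy with rfl | ⟨u, hvu, rfl⟩
  · exact le_root _
  · exact toJoin_le_toJoin_iff.2 (lca_le hvu (toJoin_le_toJoin_iff.1 hwy))

theorem lca_toJoin_of_ne {i j : ι} (hij : i ≠ j) (v : (T i).V) (w : (T j).V) :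
    (join T).lca (toJoin T i v) (toJoin T j w) = some none := by
  have le_some_none {k : ι} (u : (T k).V) : (join T).le (toJoin T k u) (some none) :=
    toJoin_root (T := T) k ▸ toJoin_le_toJoin_iff.2 (le_root u)
  refine lca_eq_of_isLCA (le_some_none v) (le_some_none w) fun y hvy hwy => ?_
  rcases join_le_toJoin_iff.1 hvy with rfl | ⟨u, -, rfl⟩
  · exact le_root _
  · rcases join_le_toJoin_iff.1 hwy with h | ⟨u', -, h⟩
    · exact absurd h (toJoin_ne_none i u)
    · rw [← h, (toJoin_eq_toJoin h).resolve_left (Ne.symm hij)]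
      exact le_refl _

theorem isLeaf_toJoin_iff {i : ι} {v : (T i).V} :
    (join T).isLeaf (toJoin T i v) ↔ (T i).isLeaf v := by
  by_cases hv : v = (T i).root
  · subst hv
    refine iff_of_false (fun h => toJoin_rho_ne_some_none (T := T) i ?_) root_not_isLeaf
    rw [toJoin_root] at h
    exact h _ (joinParent_toJoin_rho i)
  · simp only [isLeaf, join, joinParent_eq_toJoin_iff hv, forall_exists_index, and_imp]
    exact ⟨fun h w hw => toJoin_injective i (h _ w rfl hw),
      fun h _ w hu hw => hu ▸ congrArg (toJoin T i) (h w hw)⟩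

theorem exists_eq_toJoin {x : (join T).V} (hx : x ≠ (join T).root) :
    ∃ i v, x = toJoin T i v := by
  rcases x with _ | _ | ⟨i, v, hv⟩
  · exact absurd rfl hx
  · exact ⟨Classical.arbitrary ι, _, (toJoin_root _).symm⟩
  · exact ⟨i, v, (toJoin_of_ne_root hv).symm⟩

end

end PPTree

namespace LeafTree

open PPTree

variable {W ι : Type} [Fintype W] [DecidableEq W] [DecidableEq ι] (f : W → ι)
  (T : ∀ i, LeafTree {w // f w = i})

def joinEmb (w : W) : JoinV fun i => (T i).toPPTree :=
  toJoin _ (f w) ((T (f w)).emb ⟨w, rfl⟩)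

variable {f T}

theorem joinEmb_eq {w : W} {i : ι} (hw : f w = i) :
    joinEmb f T w = toJoin _ i ((T i).emb ⟨w, hw⟩) := by
  subst hw; rfl

theorem joinEmb_injective : Function.Injective (joinEmb f T) := by
  intro x y h
  rcases toJoin_eq_toJoin h with hxy | hroot
  · rw [joinEmb_eq rfl, joinEmb_eq hxy.symm] at h
    simpa using (T (f x)).emb_inj (toJoin_injective _ h)
  · rw [← toJoin_root] at hroot
    exact (isLeaf_ne_root ((T (f x)).emb_leaf _) (toJoin_injective _ hroot)).elim

variable (f T) [Fintype ι] [Nontrivial ι]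

def join : LeafTree W where
  toPPTree := PPTree.join fun i => (T i).toPPTree
  emb := joinEmb f T
  emb_inj := joinEmb_injective
  emb_leaf w := isLeaf_toJoin_iff.2 ((T (f w)).emb_leaf _)
  emb_surj l hl := by
    obtain ⟨i, v, rfl⟩ := exists_eq_toJoin (isLeaf_ne_root hl)
    obtain ⟨⟨w, rfl⟩, rfl⟩ := (T i).emb_surj v (isLeaf_toJoin_iff.1 hl)
    exact ⟨w, rfl⟩

variable {f T}

theorem join_toPPTree : (join f T).toPPTree = PPTree.join fun i => (T i).toPPTree := rfl

theorem join_emb : (join f T).emb = joinEmb f T := rfl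

theorem orthologyGraph_join_adj_of_eq (t : ∀ i, (T i).V → Bool) (b : Bool) {x y : W}
    (h : f x = f y) :
    ((join f T).orthologyGraph (joinLabel t b)).Adj x y ↔
      ((T (f x)).orthologyGraph (t (f x))).Adj ⟨x, rfl⟩ ⟨y, h.symm⟩ := by
  have hroot (w) : (T (f x)).emb w ≠ (T (f x)).root := isLeaf_ne_root ((T (f x)).emb_leaf w)
  simp only [orthologyGraph, join_toPPTree, join_emb]
  rw [joinEmb_eq rfl, joinEmb_eq h.symm, lca_toJoin,
    joinLabel_toJoin _ _ (lca_ne_root (hroot _) (hroot _))]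
  simp [Subtype.ext_iff]

theorem orthologyGraph_join_adj_of_ne (t : ∀ i, (T i).V → Bool) (b : Bool) {x y : W}
    (h : f x ≠ f y) :
    ((join f T).orthologyGraph (joinLabel t b)).Adj x y ↔ b = true := by
  simp only [orthologyGraph, join_toPPTree, join_emb]
  rw [joinEmb_eq rfl, joinEmb_eq rfl, lca_toJoin_of_ne h]
  exact and_iff_right fun hxy => h (congrArg f hxy)

end LeafTree

def PPTree.singleLeaf : PPTree where
  V := Bool
  root := true
  parent _ := true
  parent_root := rfl
  reach _ := ⟨1, rfl⟩
  planted := ⟨false, ⟨Bool.false_ne_true, rfl⟩, fun v hv => by simpa using hv.1⟩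
  phylo v hv := by simp_all

def LeafTree.ofSubsingleton (W : Type) [Fintype W] [DecidableEq W] [Nonempty W]
    [Subsingleton W] : LeafTree W where
  toPPTree := PPTree.singleLeaf
  emb _ := false
  emb_inj _ _ _ := Subsingleton.elim _ _
  emb_leaf _ _ h := Bool.noConfusion h
  emb_surj l hl := by
    cases l
    · exact ⟨Classical.arbitrary W, rfl⟩
    · exact absurd (hl false rfl) Bool.false_ne_true

theorem IsCograph.exists_orthologyGraph_eq {W : Type} [Fintype W] [DecidableEq W] [Nonempty W]
    {G : SimpleGraph W} (hG : IsCograph G) :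
    ∃ (T : LeafTree W) (t : T.V → Bool), T.orthologyGraph t = G := by
  induction h : Fintype.card W using Nat.strong_induction_on generalizing W with
  | _ n ih =>
  rcases subsingleton_or_nontrivial W with hW | hW
  · refine ⟨LeafTree.ofSubsingleton W, fun _ => false, ?_⟩
    ext x y
    exact iff_of_false (fun h => h.1 (Subsingleton.elim x y)) fun h => h.ne (Subsingleton.elim x y)
  obtain ⟨f, b, ⟨x, y, hxy⟩, hcross⟩ := hG.exists_bool_adj_iff
  have hfibre (i : Bool) : ∃ u u', f u = i ∧ f u' ≠ i := by
    by_cases hx : f x = i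
    · exact ⟨x, y, hx, hx ▸ hxy.symm⟩
    · exact ⟨y, x, by cases i <;> simp_all, hx⟩
  have hT (i : Bool) : ∃ (T : LeafTree {w // f w = i}) (t : T.V → Bool),
      T.orthologyGraph t = G.comap Subtype.val := by
    obtain ⟨u, u', hu, hu'⟩ := hfibre i
    have : Nonempty {w // f w = i} := ⟨⟨u, hu⟩⟩
    exact ih _ (h ▸ Fintype.card_subtype_lt hu') (hG.comap Subtype.val_injective) rfl
  choose T t hT using hT
  refine ⟨LeafTree.join f T, PPTree.joinLabel t b, ?_⟩
  ext u w
  by_cases huw : f u = f w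
  · rw [LeafTree.orthologyGraph_join_adj_of_eq t b huw, hT]
    rfl
  · rw [LeafTree.orthologyGraph_join_adj_of_ne t b huw, hcross u w huw]

/-- An undirected graph `G` is an orthology graph
`Θ(T,t)` for some tree `T` with leaf set `V(G)` and event labeling `t`
(with `true` = speciation `•` and `false` = duplication `□`) iff `G` is a
cograph. -/
theorem orthology_graph_iff_cograph
    {V : Type} [Fintype V] [DecidableEq V] [Nonempty V]
    (G : SimpleGraph V) :
    (∃ (T : LeafTree V) (t : T.toPPTree.V → Bool),
        ∀ x y : V, G.Adj x y ↔
          x ≠ y ∧ t (T.toPPTree.lca (T.emb x) (T.emb y)) = true) ↔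
    IsCograph G := by
  constructor
  · rintro ⟨T, t, hG⟩
    have hΘ : T.orthologyGraph t = G := by
      ext x y
      exact (hG x y).symm
    exact hΘ ▸ T.isCograph_orthologyGraph t
  · intro hG
    obtain ⟨T, t, rfl⟩ := hG.exists_orthologyGraph_eq
    exact ⟨T, t, fun _ _ => Iff.rfl⟩
end

section
/- An undirected graph G is an undirected Fitch graph, i.e., G = 𝔉_sym(T,H) for some rooted tree T with leaf set V(G) and some H ⊆ E(T), if and only if G is a complete multipartite graph. -/
/-- A finite rooted tree, encoded by a parent function: the root is a fixed
point of `parent`, and every vertex reaches the root by iterating `parent`. -/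
structure RTree where
  V : Type
  [fintypeV : Fintype V]
  [decEqV : DecidableEq V]
  root : V
  parent : V → V
  parent_root : parent root = root
  reach : ∀ v : V, ∃ n : ℕ, parent^[n] v = root

attribute [instance] RTree.fintypeV RTree.decEqV

namespace RTree

variable (T : RTree)

/-- `T.le x y` means `x ⪯_T y`, i.e. `y` is an ancestor of `x` (or `x = y`). -/
def le (x y : T.V) : Prop := ∃ n : ℕ, T.parent^[n] x = y

/-- `T.lt x y` means `x ≺_T y`. -/
def lt (x y : T.V) : Prop := T.le x y ∧ x ≠ y

/-- Leaves are the `⪯_T`-minimal vertices, i.e. vertices without children. -/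
def isLeaf (v : T.V) : Prop := ∀ u, T.parent u = v → u = v

/-- The last common ancestor of two vertices: the `⪯_T`-minimal common
ancestor. -/
noncomputable def lca (x y : T.V) : T.V :=
  @Classical.epsilon _ ⟨T.root⟩
    fun v => T.le x v ∧ T.le y v ∧ ∀ w, T.le x w → T.le y w → T.le v w

end RTree

/-- A rooted tree whose leaf set is (identified with) the finite type `L`
via the embedding `emb`.  Edges of the tree are identified with their child
endpoints (the vertex `w ≠ root` represents the edge `(parent w, w)`). -/
structure LeafRTree (L : Type) [Fintype L] [DecidableEq L] extends RTree where
  emb : L → toRTree.V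
  emb_inj : Function.Injective emb
  emb_leaf : ∀ v : L, toRTree.isLeaf (emb v)
  emb_surj : ∀ l, toRTree.isLeaf l → ∃ v : L, emb v = l

section Fitch

variable {L : Type} [Fintype L] [DecidableEq L]

/-- Arc `(x,y)` of the directed Fitch graph `𝔉(T,H)`: the path from
`lca_T(x,y)` to `y` contains an edge of `H` (edges are identified with their
child endpoints `w`, so the edges of this path are those with
`y ⪯ w ≺ lca_T(x,y)`). -/
def FitchArc (T : LeafRTree L) (H : Set T.toRTree.V) (x y : L) : Prop :=
  ∃ w : T.toRTree.V, w ∈ H ∧ T.toRTree.le (T.emb y) w ∧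
    T.toRTree.lt w (T.toRTree.lca (T.emb x) (T.emb y))

/-- `G` is a directed Fitch graph: `G = 𝔉(T,H)` for some rooted tree `T`
with leaf set `L` and some set `H ⊆ E(T)` of HGT-edges. -/
def IsFitch (G : L → L → Prop) : Prop :=
  ∃ (T : LeafRTree L) (H : Set T.toRTree.V),
    H ⊆ {v : T.toRTree.V | v ≠ T.toRTree.root} ∧
    ∀ x y : L, G x y ↔ FitchArc T H x y

/-- The closed complementary neighborhood `N̄[x] = {y : (x,y) ∉ E(G)}`. -/
def Nbar (G : L → L → Prop) (x : L) : Set L := {y : L | ¬ G x y}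

end Fitch

/-- Edge `xy` of the undirected Fitch graph `𝔉_sym(T,H)`: the path in `T`
between `x` and `y` contains an edge of `H` (edges are identified with their
child endpoints `w`; the edges of the path between `x` and `y` are those with
`x ⪯ w` or `y ⪯ w`, and `w ≺ lca_T(x,y)`). -/
def FitchEdgeSym {L : Type} [Fintype L] [DecidableEq L]
    (T : LeafRTree L) (H : Set T.toRTree.V) (x y : L) : Prop :=
  ∃ w : T.toRTree.V, w ∈ H ∧
    (T.toRTree.le (T.emb x) w ∨ T.toRTree.le (T.emb y) w) ∧
    T.toRTree.lt w (T.toRTree.lca (T.emb x) (T.emb y))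


/-!
An edge `w` of a rooted tree lies on the path between two leaves iff exactly one of them
lies below `w`. Hence two leaves are non-adjacent in `𝔉_sym(T,H)` iff they have the same set of
HGT-edges above them, and colouring each leaf by that set exhibits `𝔉_sym(T,H)` as complete
multipartite. Conversely, a complete multipartite graph is `𝔉_sym(T,H)` for the tree of depth two
with one inner vertex per class, the leaves of a class hanging from its inner vertex, and `H` the
edges from the root to the inner vertices.
-/

namespace RTree

variable {T : RTree}

theorem le_refl (v : T.V) : T.le v v := ⟨0, rfl⟩

theorem le_trans {u v w : T.V} (huv : T.le u v) (hvw : T.le v w) : T.le u w := by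
  obtain ⟨n, rfl⟩ := huv
  obtain ⟨m, rfl⟩ := hvw
  exact ⟨m + n, Function.iterate_add_apply _ _ _ _⟩

theorem iterate_parent_root (n : ℕ) : T.parent^[n] T.root = T.root :=
  Function.iterate_fixed T.parent_root n

theorem le_antisymm {u v : T.V} (huv : T.le u v) (hvu : T.le v u) : u = v := by
  obtain ⟨n, rfl⟩ := huv
  obtain ⟨m, hm⟩ := hvu
  rcases Nat.eq_zero_or_pos (m + n) with h | h
  · rw [show n = 0 by omega, Function.iterate_zero_apply]
  -- `u` returns to itself after `m + n > 0` steps, but every vertex eventually reaches the root.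
  have hper : Function.IsPeriodicPt T.parent (m + n) u := by
    rw [Function.IsPeriodicPt, Function.IsFixedPt, Function.iterate_add_apply, hm]
  obtain ⟨N, hN⟩ := T.reach u
  have hroot : u = T.root := by
    have key := (hper.mul_const N).eq
    rw [← Nat.sub_add_cancel (Nat.le_mul_of_pos_left N h), Function.iterate_add_apply, hN,
      iterate_parent_root] at key
    exact key.symm
  rw [hroot, iterate_parent_root]

theorem le_total_of_le {x a b : T.V} (ha : T.le x a) (hb : T.le x b) :
    T.le a b ∨ T.le b a := by
  obtain ⟨n, rfl⟩ := ha
  obtain ⟨m, rfl⟩ := hb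
  rcases le_total n m with h | h
  · exact Or.inl ⟨m - n, by rw [← Function.iterate_add_apply, Nat.sub_add_cancel h]⟩
  · exact Or.inr ⟨n - m, by rw [← Function.iterate_add_apply, Nat.sub_add_cancel h]⟩

theorem exists_lca (x y : T.V) :
    ∃ v, T.le x v ∧ T.le y v ∧ ∀ w, T.le x w → T.le y w → T.le v w := by
  classical
  have hex : ∃ n : ℕ, T.le y (T.parent^[n] x) := by
    obtain ⟨n, hn⟩ := T.reach x
    exact ⟨n, hn ▸ T.reach y⟩
  refine ⟨T.parent^[Nat.find hex] x, ⟨_, rfl⟩, Nat.find_spec hex, ?_⟩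
  rintro w ⟨m, rfl⟩ hyw
  have hle : Nat.find hex ≤ m := Nat.find_min' hex hyw
  exact ⟨m - Nat.find hex, by rw [← Function.iterate_add_apply, Nat.sub_add_cancel hle]⟩

theorem le_lca_left (x y : T.V) : T.le x (T.lca x y) :=
  (Classical.epsilon_spec (exists_lca x y)).1

theorem le_lca_right (x y : T.V) : T.le y (T.lca x y) :=
  (Classical.epsilon_spec (exists_lca x y)).2.1

theorem lca_le {x y w : T.V} (hx : T.le x w) (hy : T.le y w) : T.le (T.lca x y) w :=
  (Classical.epsilon_spec (exists_lca x y)).2.2 w hx hy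

theorem lca_comm (x y : T.V) : T.lca x y = T.lca y x :=
  le_antisymm (lca_le (le_lca_right y x) (le_lca_left y x))
    (lca_le (le_lca_right x y) (le_lca_left x y))

theorem lt_lca_iff_not_le {x y w : T.V} (hx : T.le x w) :
    T.lt w (T.lca x y) ↔ ¬ T.le y w := by
  constructor
  · rintro ⟨hw, hne⟩ hy
    exact hne (le_antisymm hw (lca_le hx hy))
  · intro hy
    have hw : T.le w (T.lca x y) :=
      (le_total_of_le hx (le_lca_left x y)).resolve_right
        fun h => hy (le_trans (le_lca_right x y) h)
    exact ⟨hw, fun h => hy (h ▸ le_lca_right x y)⟩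

/-- The edge above `w` lies on the path between `x` and `y` iff it separates them. -/
theorem le_or_le_and_lt_lca_iff_xor {x y w : T.V} :
    (T.le x w ∨ T.le y w) ∧ T.lt w (T.lca x y) ↔ Xor (T.le x w) (T.le y w) := by
  constructor
  · rintro ⟨hx | hy, hw⟩
    · exact Or.inl ⟨hx, (lt_lca_iff_not_le hx).1 hw⟩
    · exact Or.inr ⟨hy, (lt_lca_iff_not_le hy).1 (lca_comm x y ▸ hw)⟩
  · rintro (⟨hx, hy⟩ | ⟨hy, hx⟩)
    · exact ⟨Or.inl hx, (lt_lca_iff_not_le hx).2 hy⟩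
    · exact ⟨Or.inr hy, lca_comm y x ▸ (lt_lca_iff_not_le hy).2 hx⟩

def ancestorsIn (T : RTree) (H : Set T.V) (v : T.V) : Set T.V := {w ∈ H | T.le v w}

end RTree

theorem fitchEdgeSym_iff_ancestorsIn_ne {L : Type} [Fintype L] [DecidableEq L]
    (T : LeafRTree L) (H : Set T.toRTree.V) (x y : L) :
    FitchEdgeSym T H x y ↔ T.ancestorsIn H (T.emb x) ≠ T.ancestorsIn H (T.emb y) := by
  simp only [FitchEdgeSym, RTree.le_or_le_and_lt_lca_iff_xor, xor_iff_not_iff, ne_eq,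
    Set.ext_iff, RTree.ancestorsIn, Set.mem_ofPred_eq, not_forall, and_congr_right_iff, exists_prop]

section TwoLevel

variable {L κ : Type} [Fintype L] [DecidableEq L] [Fintype κ] [DecidableEq κ] [Nonempty L]

def LeafRTree.twoLevel (p : L → κ) (hp : Function.Surjective p) : LeafRTree L where
  V := Option (κ ⊕ L)
  root := none
  parent
    | none | some (.inl _) => none
    | some (.inr x) => some (.inl (p x))
  parent_root := rfl
  reach v := ⟨2, by rcases v with _ | _ | _ <;> rfl⟩
  emb x := some (.inr x)
  emb_inj _ _ h := by simpa using h
  emb_leaf _ u hu := by rcases u with _ | _ | _ <;> simp_all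
  emb_surj
    | none, hl => absurd (hl (some (.inl (p (Classical.arbitrary L)))) rfl) (by simp)
    | some (.inl k), hl => by
      obtain ⟨x, rfl⟩ := hp k
      exact absurd (hl (some (.inr x)) rfl) (by simp)
    | some (.inr x), _ => ⟨x, rfl⟩

variable (p : L → κ) (hp : Function.Surjective p)

namespace LeafRTree.twoLevel

def inner (k : κ) : (twoLevel p hp).V := some (.inl k)

theorem inner_injective : Function.Injective (inner p hp) :=
  fun _ _ h => Sum.inl_injective (Option.some_injective _ h)

theorem le_inner_iff (x : L) (k : κ) :
    (twoLevel p hp).le ((twoLevel p hp).emb x) (inner p hp k) ↔ p x = k := by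
  constructor
  · rintro ⟨_ | _ | n, h⟩
    · cases h
    · exact inner_injective p hp h
    · change (twoLevel p hp).parent^[n] (twoLevel p hp).root = _ at h
      rw [RTree.iterate_parent_root] at h
      cases h
  · rintro rfl
    exact ⟨1, rfl⟩

theorem ancestorsIn_range_inner (x : L) :
    (twoLevel p hp).ancestorsIn (Set.range (inner p hp)) ((twoLevel p hp).emb x) =
      {inner p hp (p x)} := by
  ext w
  constructor
  · rintro ⟨⟨k, rfl⟩, h⟩
    rw [Set.mem_singleton_iff, (le_inner_iff p hp x k).1 h]
  · rintro rfl
    exact ⟨⟨_, rfl⟩, (le_inner_iff p hp x _).2 rfl⟩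

theorem fitchEdgeSym_range_inner_iff (x y : L) :
    FitchEdgeSym (twoLevel p hp) (Set.range (inner p hp)) x y ↔ p x ≠ p y := by
  rw [fitchEdgeSym_iff_ancestorsIn_ne, ancestorsIn_range_inner, ancestorsIn_range_inner, ne_eq,
    Set.singleton_eq_singleton_iff, (inner_injective p hp).eq_iff]

end LeafRTree.twoLevel

end TwoLevel

/-- An undirected graph `G` is an undirected Fitch graph,
i.e. `G = 𝔉_sym(T,H)` for some rooted tree `T` with leaf set `V(G)` and some
`H ⊆ E(T)`, iff `G` is a complete multipartite graph (vertices can be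
partitioned into classes such that two vertices are adjacent iff they lie in
different classes). -/
theorem undirected_fitch_iff_complete_multipartite
    {L : Type} [Fintype L] [DecidableEq L] [Nonempty L]
    (G : SimpleGraph L) :
    (∃ (T : LeafRTree L) (H : Set T.toRTree.V),
        H ⊆ {v : T.toRTree.V | v ≠ T.toRTree.root} ∧
        ∀ x y : L, G.Adj x y ↔ x ≠ y ∧ FitchEdgeSym T H x y) ↔
    (∃ (ι : Type) (c : L → ι), ∀ x y : L, G.Adj x y ↔ c x ≠ c y) := by
  constructor
  · rintro ⟨T, H, -, hG⟩
    refine ⟨Set T.V, T.ancestorsIn H ∘ T.emb, fun x y => ?_⟩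
    rw [hG, fitchEdgeSym_iff_ancestorsIn_ne]
    exact and_iff_right_of_imp (ne_of_apply_ne (T.ancestorsIn H ∘ T.emb))
  · rintro ⟨ι, c, hc⟩
    classical
    refine ⟨.twoLevel (Set.rangeFactorization c) Set.rangeFactorization_surjective,
      Set.range (LeafRTree.twoLevel.inner _ _), ?_, fun x y => ?_⟩
    · rintro _ ⟨k, rfl⟩
      exact Option.some_ne_none _
    · rw [hc, LeafRTree.twoLevel.fitchEdgeSym_range_inner_iff,
        (Set.rangeFactorization_eq_rangeFactorization_iff x y).ne]
      exact (and_iff_right_of_imp (ne_of_apply_ne c)).symm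
end
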